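/- arXiv:1001.4381 — 4 statements merged into one kernel-verified Lean document; each statement's English description precedes it below -/
import Mathlib

section
/- Let (Σ_d, Σ_s, R_d, R_s) be a stream specification and let t be a ground term of sort s whose root symbol is not ':'. Then there exists a position p ∈ Pos(t) such that t has a redex at p and for all positions p' strictly above p, the root symbol of the subterm t|_{p'} is not ':'. -/
/-- First-order terms over a signature `F` with natural-number variables. -/
inductive Trm (F : Type) : Type
  | var : ℕ → Trm F
  | app : F → List (Trm F) → Trm F

namespace Trm

variable {F : Type}

/-- Application of a substitution to a term. -/
def subst (σ : ℕ → Trm F) : Trm F → Trm F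
  | var n => σ n
  | app f ts => app f (ts.attach.map fun x => subst σ x.1)
decreasing_by have := List.sizeOf_lt_of_mem x.2; simp; omega

/-- The list of variables occurring in a term. -/
def varList : Trm F → List ℕ
  | var n => [n]
  | app _ ts => ts.attach.flatMap fun x => varList x.1
decreasing_by have := List.sizeOf_lt_of_mem x.2; simp; omega

/-- A term is ground if it contains no variables. -/
def Ground (t : Trm F) : Prop := varList t = []

/-- The subterm at a position (a list of argument indices), if it exists. -/
def subtermAt : Trm F → List ℕ → Option (Trm F)
  | t, [] => some t
  | var _, _ :: _ => none
  | app _ ts, i :: p => (ts[i]?).bind fun t => subtermAt t p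

/-- Replacement of the subterm at a position by another term, if the position exists. -/
def replaceAt : Trm F → List ℕ → Trm F → Option (Trm F)
  | _, [], s => some s
  | var _, _ :: _, _ => none
  | app f ts, i :: p, s =>
      (ts[i]?).bind fun t => (replaceAt t p s).map fun t' => app f (ts.set i t')

def IsVar : Trm F → Prop
  | var _ => True
  | app _ _ => False

end Trm

open Trm

variable {F : Type}

/-- A rewrite rule is a pair (lhs, rhs). -/
abbrev Rule (F : Type) := Trm F × Trm F

/-- A term is a redex w.r.t. a TRS `R` if it is an instance of a left-hand side. -/
def IsRedex (R : Set (Rule F)) (t : Trm F) : Prop :=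
  ∃ (l r : Trm F) (σ : ℕ → Trm F), (l, r) ∈ R ∧ t = subst σ l

/-- `t` has a redex at position `p`. -/
def HasRedexAt (R : Set (Rule F)) (t : Trm F) (p : List ℕ) : Prop :=
  ∃ s, subtermAt t p = some s ∧ IsRedex R s

/-- A rewrite step of `R` at position `p`. -/
def RewriteAt (R : Set (Rule F)) (t t' : Trm F) (p : List ℕ) : Prop :=
  ∃ (l r : Trm F) (σ : ℕ → Trm F), (l, r) ∈ R ∧
    subtermAt t p = some (subst σ l) ∧ replaceAt t p (subst σ r) = some t'

/-- A rewrite step of `R` (at some position). -/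
def Rewrite (R : Set (Rule F)) (t t' : Trm F) : Prop := ∃ p, RewriteAt R t t' p

/-- Many-step rewriting. -/
abbrev RewriteStar (R : Set (Rule F)) : Trm F → Trm F → Prop :=
  Relation.ReflTransGen (Rewrite R)

/-- `p` is a strict (proper) prefix of `q`, i.e. position `p` is strictly above `q`. -/
def StrictPref (p q : List ℕ) : Prop := p <+: q ∧ p ≠ q

/-- Two positions are independent (parallel) if neither is a prefix of the other. -/
def Indep (p q : List ℕ) : Prop := ¬ p <+: q ∧ ¬ q <+: p

/-- An outermost rewrite step at position `p`: no redex strictly above `p`. -/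
def OutStepAt (R : Set (Rule F)) (t t' : Trm F) (p : List ℕ) : Prop :=
  RewriteAt R t t' p ∧ ∀ q, StrictPref q p → ¬ HasRedexAt R t q

def OutStep (R : Set (Rule F)) (t t' : Trm F) : Prop := ∃ p, OutStepAt R t t' p

/-- A non-outermost rewrite step at position `p`: some redex strictly above `p`. -/
def NonOutStepAt (R : Set (Rule F)) (t t' : Trm F) (p : List ℕ) : Prop :=
  RewriteAt R t t' p ∧ ∃ q, StrictPref q p ∧ HasRedexAt R t q

def NonOutStep (R : Set (Rule F)) (t t' : Trm F) : Prop := ∃ p, NonOutStepAt R t t' p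

/-- A sequence of rewrite steps at the listed positions. -/
inductive StepsAt (R : Set (Rule F)) : Trm F → Trm F → List (List ℕ) → Prop
  | nil (t) : StepsAt R t t []
  | cons {t t' t'' p ps} : RewriteAt R t t' p → StepsAt R t' t'' ps →
      StepsAt R t t'' (p :: ps)

/-- A parallel rewrite step: contraction of redexes at pairwise independent positions. -/
def ParStep (R : Set (Rule F)) (t t' : Trm F) : Prop :=
  ∃ ps : List (List ℕ), ps.Pairwise Indep ∧ StepsAt R t t' ps

/-- A parallel step all of whose contracted positions are non-outermost in the source,
i.e. each contracted redex lies strictly below another redex. -/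
def ParNonOut (R : Set (Rule F)) (t t' : Trm F) : Prop :=
  ∃ ps : List (List ℕ), ps.Pairwise Indep ∧
    (∀ p ∈ ps, ∃ q, StrictPref q p ∧ HasRedexAt R t q) ∧ StepsAt R t t' ps

/-- Left-linearity: no variable occurs twice in a left-hand side. -/
def LeftLinear (R : Set (Rule F)) : Prop := ∀ l r, (l, r) ∈ R → (varList l).Nodup

/-- Non-overlapping: the only overlaps between left-hand sides are trivial root
overlaps of a rule with itself. -/
def NonOverlapping (R : Set (Rule F)) : Prop :=
  ∀ l₁ r₁ l₂ r₂, (l₁, r₁) ∈ R → (l₂, r₂) ∈ R →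
    ∀ p s, subtermAt l₁ p = some s → ¬ IsVar s →
      ∀ (σ τ : ℕ → Trm F), subst σ s = subst τ l₂ →
        p = [] ∧ l₁ = l₂ ∧ r₁ = r₂

/-- Orthogonality: left-linear and non-overlapping. -/
def Orthogonal (R : Set (Rule F)) : Prop := LeftLinear R ∧ NonOverlapping R

/-- A symbol `c` is a constructor of `R` if no left-hand side has root `c`. -/
def IsConstructor (R : Set (Rule F)) (c : F) : Prop :=
  ∀ l r, (l, r) ∈ R → ∀ ts, l ≠ app c ts

/-- An infinite outermost reduction (with its sequence of contracted positions). -/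
def InfOutRed (R : Set (Rule F)) (ts : ℕ → Trm F) (ps : ℕ → List ℕ) : Prop :=
  ∀ i, OutStepAt R (ts i) (ts (i + 1)) (ps i)

/-- Balancedness: every redex is eventually reduced or consumed by a step at or
above its position. -/
def BalancedRed (R : Set (Rule F)) (ts : ℕ → Trm F) (ps : ℕ → List ℕ) : Prop :=
  ∀ i q, HasRedexAt R (ts i) q → ∃ j, i ≤ j ∧ ps j <+: q

/-- BalancedRed outermost termination: no infinite balanced outermost reduction. -/
def BalOutTerminating (R : Set (Rule F)) : Prop :=
  ¬ ∃ (ts : ℕ → Trm F) (ps : ℕ → List ℕ), InfOutRed R ts ps ∧ BalancedRed R ts ps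

/-- Outermost termination: no infinite outermost reduction. -/
def OutTerminating (R : Set (Rule F)) : Prop :=
  ¬ ∃ (ts : ℕ → Trm F) (ps : ℕ → List ℕ), InfOutRed R ts ps

/-- A term with the stream constructor ':' (here `c`) at the root. -/
def ConsRooted (c : F) (t : Trm F) : Prop := ∃ u t', t = app c [u, t']

/-- `ConsTower c n t` says `t = u₁ : u₂ : ⋯ : uₙ : t'`. -/
def ConsTower (c : F) : ℕ → Trm F → Prop
  | 0, _ => True
  | n + 1, t => ∃ u t', t = app c [u, t'] ∧ ConsTower c n t'

/-- Productivity of a term: it produces arbitrarily many ':'-elements. -/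
def Productive (R : Set (Rule F)) (c : F) (t : Trm F) : Prop :=
  ∀ n, ∃ t', RewriteStar R t t' ∧ ConsTower c n t'

/-- Well-sortedness of terms, with sorts `Bool` (`false` = data, `true` = stream),
argument/result sorts given by `ar` and variable sorts by `vs`. -/
inductive WS (ar : F → List Bool × Bool) (vs : ℕ → Bool) : Trm F → Bool → Prop
  | var (n) : WS ar vs (var n) (vs n)
  | app (f) (ts : List (Trm F)) : ts.length = (ar f).1.length →
      (∀ (i : ℕ) t b, ts[i]? = some t → (ar f).1[i]? = some b → WS ar vs t b) →
      WS ar vs (app f ts) (ar f).2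

/-- All function symbols of a term belong to the set `S`. -/
inductive SymOver (S : Set F) : Trm F → Prop
  | var (n) : SymOver S (var n)
  | app (f) (ts : List (Trm F)) : f ∈ S → (∀ t ∈ ts, SymOver S t) → SymOver S (app f ts)

/-- A stream specification `(Σ_d, Σ_s, R_d, R_s)` over signature `F`. -/
structure StreamSpec (F : Type) where
  /-- argument sorts and result sort of each symbol -/
  ar : F → List Bool × Bool
  /-- sorts of variables -/
  vs : ℕ → Bool
  /-- the stream constructor ':' of type d × s → s -/
  cons : F
  cons_ar : ar cons = ([false, true], true)
  /-- the data signature Σ_d -/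
  Sd : Set F
  /-- the stream signature Σ_s -/
  Ss : Set F
  cons_not_d : cons ∉ Sd
  cons_not_s : cons ∉ Ss
  d_sorts : ∀ f ∈ Sd, (∀ b ∈ (ar f).1, b = false) ∧ (ar f).2 = false
  s_res : ∀ f ∈ Ss, (ar f).2 = true
  /-- the data rules -/
  Rd : Set (Rule F)
  /-- the stream rules -/
  Rs : Set (Rule F)
  Rd_data : ∀ rl ∈ Rd, SymOver Sd rl.1 ∧ SymOver Sd rl.2
  Rd_sorted : ∀ l r, (l, r) ∈ Rd → WS ar vs l false ∧ WS ar vs r false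
  /-- R_d is terminating -/
  Rd_term : WellFounded (fun a b : Trm F => Rewrite Rd b a)
  /-- R_d ∪ R_s is orthogonal -/
  orth : Orthogonal (Rd ∪ Rs)
  Rs_sorted : ∀ l r, (l, r) ∈ Rs → WS ar vs l true ∧ WS ar vs r true
  /-- left-hand sides of R_s have the shape f(u₁,…,uₙ,t₁,…,tₘ) with f ∈ Σ_s and
  each stream argument tᵢ a variable or of the form x : σ -/
  lhs_shape : ∀ l r, (l, r) ∈ Rs → ∃ f args, f ∈ Ss ∧ l = app f args ∧
    ∀ (i : ℕ) a, args[i]? = some a → (ar f).1[i]? = some true →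
      (∃ n, a = var n) ∨ (∃ n m, a = app cons [var n, var m])
  /-- exhaustiveness: every ground term f(u₁,…,uₙ,u_{n+1}:t₁,…) with the uᵢ data
  normal forms is a redex of R_s -/
  exhaustive : ∀ f ts, f ∈ Ss → Ground (app f ts) →
    SymOver (Sd ∪ Ss ∪ {cons}) (app f ts) → WS ar vs (app f ts) true →
    (∀ (i : ℕ) t, ts[i]? = some t →
      ((ar f).1[i]? = some false → ∀ t', ¬ Rewrite Rd t t') ∧
      ((ar f).1[i]? = some true → ∃ u t', t = app cons [u, t'])) →
    IsRedex Rs (app f ts)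

/-- A ground term of sort s over the signature of the specification. -/
def StreamSpec.GroundStream (S : StreamSpec F) (t : Trm F) : Prop :=
  Ground t ∧ SymOver (S.Sd ∪ S.Ss ∪ {S.cons}) t ∧ WS S.ar S.vs t true

/-- Productivity of the specification on all ground terms of sort s. -/
def StreamSpec.ProductiveAll (S : StreamSpec F) : Prop :=
  ∀ t, S.GroundStream t → Productive (S.Rd ∪ S.Rs) S.cons t

/-- The additional rule `x : σ → overflow`. -/
def ovRule (c ov : F) : Rule F := (app c [var 0, var 1], app ov [])

/-! A stream specification is exhaustive for ground terms, so a ground stream term rooted by a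
stream symbol is a redex unless some argument blocks the match: a data argument that is not in
normal form, or a stream argument that is not (yet) of the form `u : t`. Matching on the blocking
argument and recursing into stream arguments only, we never descend below a `:`; below a data
argument there is no `:` at all, since `:` has stream sort. -/

namespace Trm

lemma Ground.of_mem {f : F} {ts : List (Trm F)} (h : Ground (app f ts)) {u : Trm F}
    (hu : u ∈ ts) : Ground u := by
  unfold Ground at h ⊢
  rw [varList, List.flatMap_eq_nil_iff] at h
  exact h _ (List.mem_attach ts ⟨u, hu⟩)

lemma subtermAt_app_cons {f : F} {ts : List (Trm F)} {i : ℕ} {u : Trm F} (hu : ts[i]? = some u)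
    (q : List ℕ) : subtermAt (app f ts) (i :: q) = subtermAt u q := by
  rw [subtermAt, hu]
  rfl

end Trm

lemma SymOver.of_mem {S : Set F} {f : F} {ts : List (Trm F)} (h : SymOver S (Trm.app f ts))
    {u : Trm F} (hu : u ∈ ts) : SymOver S u := by
  cases h with
  | app _ _ _ hargs => exact hargs u hu

lemma SymOver.root_mem {S : Set F} {f : F} {ts : List (Trm F)} (h : SymOver S (Trm.app f ts)) :
    f ∈ S := by
  cases h with
  | app _ _ hf _ => exact hf

lemma WS.app_inv {ar : F → List Bool × Bool} {vs : ℕ → Bool} {f : F} {ts : List (Trm F)}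
    {b : Bool} (h : WS ar vs (Trm.app f ts) b) :
    b = (ar f).2 ∧ ts.length = (ar f).1.length ∧
      ∀ (i : ℕ) t c, ts[i]? = some t → (ar f).1[i]? = some c → WS ar vs t c := by
  cases h with
  | app _ _ hlen hargs => exact ⟨rfl, hlen, hargs⟩

lemma HasRedexAt.mono {R R' : Set (Rule F)} (hR : R ⊆ R') {t : Trm F} {p : List ℕ}
    (h : HasRedexAt R t p) : HasRedexAt R' t p := by
  obtain ⟨s, hs, l, r, σ, hlr, rfl⟩ := h
  exact ⟨_, hs, l, r, σ, hR hlr, rfl⟩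

lemma RewriteAt.hasRedexAt {R : Set (Rule F)} {t t' : Trm F} {p : List ℕ}
    (h : RewriteAt R t t' p) : HasRedexAt R t p := by
  obtain ⟨l, r, σ, hlr, hs, -⟩ := h
  exact ⟨_, hs, l, r, σ, hlr, rfl⟩

lemma HasRedexAt.app_cons {R : Set (Rule F)} {f : F} {ts : List (Trm F)} {i : ℕ} {u : Trm F}
    (hu : ts[i]? = some u) {p : List ℕ} (h : HasRedexAt R u p) :
    HasRedexAt R (app f ts) (i :: p) := by
  rwa [HasRedexAt, subtermAt_app_cons hu]

lemma strictPref_cons {i : ℕ} {p p' : List ℕ} (h : StrictPref p' (i :: p)) :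
    p' = [] ∨ ∃ q, p' = i :: q ∧ StrictPref q p := by
  obtain ⟨⟨l, hl⟩, hne⟩ := h
  cases p' with
  | nil => exact Or.inl rfl
  | cons a q =>
    cases hl
    exact Or.inr ⟨q, rfl, ⟨l, rfl⟩, fun hq => hne (congrArg _ hq)⟩

def NoConsAbove (c : F) (t : Trm F) (p : List ℕ) : Prop :=
  ∀ p', StrictPref p' p → ∀ s, subtermAt t p' = some s → ¬ ConsRooted c s

lemma noConsAbove_nil (c : F) (t : Trm F) : NoConsAbove c t [] :=
  fun _ hp' => absurd (List.prefix_nil.mp hp'.1) hp'.2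

lemma NoConsAbove.app_cons {c f : F} {ts : List (Trm F)} {i : ℕ} {u : Trm F}
    (hu : ts[i]? = some u) (hroot : ¬ ConsRooted c (app f ts)) {p : List ℕ}
    (h : NoConsAbove c u p) : NoConsAbove c (app f ts) (i :: p) := by
  intro p' hp' s hs
  rcases strictPref_cons hp' with rfl | ⟨q, rfl, hq⟩
  · cases hs
    exact hroot
  · rw [subtermAt_app_cons hu] at hs
    exact h q hq s hs

namespace StreamSpec

variable (S : StreamSpec F)

lemma root_mem_Sd_of_data {f : F} {ts : List (Trm F)} (hws : WS S.ar S.vs (app f ts) false)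
    (hsym : SymOver (S.Sd ∪ S.Ss ∪ {S.cons}) (app f ts)) : f ∈ S.Sd := by
  have hsort : (S.ar f).2 = false := (hws.app_inv.1).symm
  rcases hsym.root_mem with (hf | hf) | rfl
  · exact hf
  · simp [S.s_res f hf] at hsort
  · simp [S.cons_ar] at hsort

lemma not_consRooted_subtermAt_of_data :
    ∀ (q : List ℕ) {u : Trm F}, WS S.ar S.vs u false → SymOver (S.Sd ∪ S.Ss ∪ {S.cons}) u →
      ∀ s, subtermAt u q = some s → ¬ ConsRooted S.cons s
  | [], u, hws, _, s, hs => by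
    rintro ⟨a, b, rfl⟩
    cases hs
    simpa [S.cons_ar] using hws.app_inv.1
  | _ :: _, var _, _, _, _, hs => by cases hs
  | i :: q, app f ts, hws, hsym, s, hs => by
    obtain ⟨u, hu, hsub⟩ := Option.bind_eq_some_iff.mp hs
    have hi : i < (S.ar f).1.length :=
      hws.app_inv.2.1 ▸ (List.getElem?_eq_some_iff.mp hu).1
    have hdata : (S.ar f).1[i]? = some false := by
      rw [List.getElem?_eq_getElem hi,
        (S.d_sorts f (S.root_mem_Sd_of_data hws hsym)).1 _ (List.getElem_mem hi)]
    exact not_consRooted_subtermAt_of_data q (hws.app_inv.2.2 i u false hu hdata)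
      (hsym.of_mem (List.mem_of_getElem? hu)) s hsub

lemma noConsAbove_of_data {u : Trm F} (hws : WS S.ar S.vs u false)
    (hsym : SymOver (S.Sd ∪ S.Ss ∪ {S.cons}) u) (p : List ℕ) : NoConsAbove S.cons u p :=
  fun q _ => S.not_consRooted_subtermAt_of_data q hws hsym

lemma GroundStream.exists_app {S : StreamSpec F} {t : Trm F} (hg : S.GroundStream t)
    (hroot : ¬ ConsRooted S.cons t) : ∃ f ts, t = app f ts ∧ f ∈ S.Ss := by
  obtain ⟨hground, hsym, hws⟩ := hg
  cases t with
  | var n => simp [Ground, varList] at hground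
  | app f ts =>
    obtain ⟨hsort, hlen, -⟩ := hws.app_inv
    refine ⟨f, ts, rfl, ?_⟩
    rcases hsym.root_mem with (hf | hf) | rfl
    · simp [(S.d_sorts f hf).2] at hsort
    · exact hf
    · rw [S.cons_ar] at hlen
      obtain ⟨a, b, rfl⟩ := List.length_eq_two.mp hlen
      exact absurd ⟨a, b, rfl⟩ hroot

lemma isRedex_or_exists_blocking_arg {f : F} {ts : List (Trm F)} (hf : f ∈ S.Ss)
    (hg : S.GroundStream (app f ts)) :
    IsRedex S.Rs (app f ts) ∨ ∃ (i : ℕ) (u : Trm F), ts[i]? = some u ∧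
      (((S.ar f).1[i]? = some false ∧ ∃ u', Rewrite S.Rd u u') ∨
        ((S.ar f).1[i]? = some true ∧ ¬ ConsRooted S.cons u)) := by
  by_contra! ⟨hnot, hargs⟩
  exact hnot (S.exhaustive f ts hf hg.1 hg.2.1 hg.2.2 hargs)

theorem exists_hasRedexAt_noConsAbove (t : Trm F) (hg : S.GroundStream t)
    (hroot : ¬ ConsRooted S.cons t) :
    ∃ p, HasRedexAt (S.Rd ∪ S.Rs) t p ∧ NoConsAbove S.cons t p := by
  obtain ⟨f, ts, rfl, hf⟩ := hg.exists_app hroot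
  rcases S.isRedex_or_exists_blocking_arg hf hg with hredex | ⟨i, u, hu, hblock⟩
  · exact ⟨[], HasRedexAt.mono Set.subset_union_right ⟨_, rfl, hredex⟩,
      noConsAbove_nil _ _⟩
  have hmem : u ∈ ts := List.mem_of_getElem? hu
  have hsym : SymOver (S.Sd ∪ S.Ss ∪ {S.cons}) u := hg.2.1.of_mem hmem
  have hws : ∀ b, (S.ar f).1[i]? = some b → WS S.ar S.vs u b :=
    fun b hb => hg.2.2.app_inv.2.2 i u b hu hb
  rcases hblock with ⟨hdata, u', q, hstep⟩ | ⟨hstream, hnc⟩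
  · exact ⟨i :: q, (hstep.hasRedexAt.mono Set.subset_union_left).app_cons hu,
      (S.noConsAbove_of_data (hws false hdata) hsym q).app_cons hu hroot⟩
  · obtain ⟨p, hp, hnp⟩ :=
      exists_hasRedexAt_noConsAbove u ⟨hg.1.of_mem hmem, hsym, hws true hstream⟩ hnc
    exact ⟨i :: p, hp.app_cons hu, hnp.app_cons hu hroot⟩
termination_by t
decreasing_by subst_vars; have := List.sizeOf_lt_of_mem hmem; simp only [app.sizeOf_spec]; omega

end StreamSpec

/-- every ground term of sort s not rooted by ':' contains a redex
at a position p such that no position strictly above p is rooted by ':'. -/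
theorem redex_not_below_cons {F : Type} (S : StreamSpec F) (t : Trm F)
    (hg : S.GroundStream t) (hroot : ¬ ConsRooted S.cons t) :
    ∃ p, HasRedexAt (S.Rd ∪ S.Rs) t p ∧
      ∀ p', StrictPref p' p → ∀ s, subtermAt t p' = some s → ¬ ConsRooted S.cons s :=
  S.exists_hasRedexAt_noConsAbove t hg hroot
end

section
/- Let R be an orthogonal TRS. If t_1 rewrites to t_2 at position q by a non-outermost step, and t_2 rewrites to t_3 at position p by an outermost step, then either p is independent of q (neither is a prefix of the other) or p is a proper prefix of q. -/
open Trm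

variable {F : Type}

/-!
If `q` were a prefix of `p`, the redex strictly above `q` in `t₁` would also lie strictly
above `p`. Since the system is non-overlapping, the step at `q` takes place inside the
substitution part of that redex, and since it is left-linear, the result is again an instance of
the same left-hand side. So `t₂` still has a redex strictly above `p`, and the step at `p` is
not outermost.
-/

theorem List.not_mem_of_nodup_flatMap {α β : Type*} {g : α → List β} {l : List α}
    (h : (l.flatMap g).Nodup) {i j : ℕ} {u v : α} (hi : l[i]? = some u) (hj : l[j]? = some v)
    (hij : i ≠ j) {x : β} (hx : x ∈ g u) : x ∉ g v := by
  have hdisj := List.pairwise_iff_getElem.mp (List.nodup_flatMap.mp h).2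
  obtain ⟨hi', rfl⟩ := List.getElem?_eq_some_iff.mp hi
  obtain ⟨hj', rfl⟩ := List.getElem?_eq_some_iff.mp hj
  rcases lt_or_gt_of_ne hij with hlt | hlt
  · exact fun hx' => hdisj i j hi' hj' hlt hx hx'
  · exact fun hx' => hdisj j i hj' hi' hlt hx' hx

namespace Trm

@[simp] theorem subst_var (σ : ℕ → Trm F) (n : ℕ) : subst σ (var n) = σ n := by
  rw [subst]

theorem subst_app (σ : ℕ → Trm F) (f : F) (ts : List (Trm F)) :
    subst σ (app f ts) = app f (ts.map (subst σ)) := by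
  rw [subst, List.attach_map_val]

theorem varList_app (f : F) (ts : List (Trm F)) :
    varList (app f ts) = ts.flatMap varList := by
  rw [varList]; simp

@[simp] theorem subtermAt_nil (t : Trm F) : subtermAt t [] = some t := by
  cases t <;> rfl

@[simp] theorem replaceAt_nil (t s : Trm F) : replaceAt t [] s = some s := by
  cases t <;> rfl

@[simp] theorem subtermAt_var_cons (n i : ℕ) (p : List ℕ) :
    subtermAt (var n : Trm F) (i :: p) = none := rfl

@[simp] theorem replaceAt_var_cons (n i : ℕ) (p : List ℕ) (s : Trm F) :
    replaceAt (var n) (i :: p) s = none := rfl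

theorem subtermAt_app_cons_s2 (f : F) (ts : List (Trm F)) (i : ℕ) (p : List ℕ) :
    subtermAt (app f ts) (i :: p) = ts[i]?.bind fun t => subtermAt t p := rfl

theorem replaceAt_app_cons (f : F) (ts : List (Trm F)) (i : ℕ) (p : List ℕ) (s : Trm F) :
    replaceAt (app f ts) (i :: p) s
      = ts[i]?.bind fun t => (replaceAt t p s).map fun t' => app f (ts.set i t') := rfl

theorem subtermAt_append (t : Trm F) (p q : List ℕ) :
    subtermAt t (p ++ q) = (subtermAt t p).bind fun u => subtermAt u q := by
  induction p generalizing t with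
  | nil => simp
  | cons i p ih =>
    cases t with
    | var n => rfl
    | app f ts =>
      rw [List.cons_append, subtermAt_app_cons_s2, subtermAt_app_cons_s2]
      cases ts[i]? <;> simp [ih]

theorem subtermAt_replaceAt {t t' s : Trm F} {p : List ℕ}
    (h : replaceAt t p s = some t') : subtermAt t' p = some s := by
  induction p generalizing t t' with
  | nil => simp_all
  | cons i p ih =>
    cases t with
    | var n => simp at h
    | app f ts =>
      simp only [replaceAt_app_cons, Option.bind_eq_some_iff, Option.map_eq_some_iff] at h
      obtain ⟨u, hu, u', hu', rfl⟩ := h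
      have hi : i < ts.length := (List.getElem?_eq_some_iff.mp hu).1
      simpa [subtermAt_app_cons_s2, hi] using ih hu'

theorem exists_replaceAt_of_replaceAt_append {t t' u s : Trm F} {p q : List ℕ}
    (h : replaceAt t (p ++ q) s = some t') (hu : subtermAt t p = some u) :
    ∃ u', replaceAt u q s = some u' ∧ replaceAt t p u' = some t' := by
  induction p generalizing t t' with
  | nil => simp_all
  | cons i p ih =>
    cases t with
    | var n => simp at hu
    | app f ts =>
      simp only [subtermAt_app_cons_s2, Option.bind_eq_some_iff] at hu
      obtain ⟨v, hv, hvu⟩ := hu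
      simp only [List.cons_append, replaceAt_app_cons, hv, Option.bind_some,
        Option.map_eq_some_iff] at h
      obtain ⟨w, hw, rfl⟩ := h
      obtain ⟨u', hu', hvu'⟩ := ih hw hvu
      exact ⟨u', hu', by simp [replaceAt_app_cons, hv, hvu']⟩

theorem subtermAt_subst (σ : ℕ → Trm F) {t u : Trm F} {p : List ℕ}
    (h : subtermAt t p = some u) : subtermAt (subst σ t) p = some (subst σ u) := by
  induction p generalizing t with
  | nil => simp_all
  | cons i p ih =>
    cases t with
    | var n => simp at h
    | app f ts =>
      simp only [subtermAt_app_cons_s2, Option.bind_eq_some_iff] at h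
      obtain ⟨v, hv, hvu⟩ := h
      simpa [subst_app, subtermAt_app_cons_s2, hv] using ih hvu

theorem mem_varList_of_subtermAt {t : Trm F} {p : List ℕ} {n : ℕ}
    (h : subtermAt t p = some (var n)) : n ∈ varList t := by
  induction p generalizing t with
  | nil => simp_all [varList]
  | cons i p ih =>
    cases t with
    | var m => simp at h
    | app f ts =>
      simp only [subtermAt_app_cons_s2, Option.bind_eq_some_iff] at h
      obtain ⟨v, hv, hvn⟩ := h
      rw [varList_app]
      exact List.mem_flatMap.mpr ⟨v, List.mem_of_getElem? hv, ih hvn⟩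

theorem subst_congr {σ τ : ℕ → Trm F} (t : Trm F)
    (h : ∀ n ∈ varList t, σ n = τ n) : subst σ t = subst τ t := by
  cases t with
  | var n => simpa [varList] using h
  | app f ts =>
    rw [subst_app, subst_app]
    congr 1
    refine List.map_congr_left fun u hu => ?_
    exact subst_congr u fun n hn => h n (by rw [varList_app]; exact List.mem_flatMap.mpr ⟨u, hu, hn⟩)
termination_by sizeOf t
decreasing_by subst_vars; have := List.sizeOf_lt_of_mem hu; simp; omega

theorem subst_update_of_not_mem (σ : ℕ → Trm F) {t : Trm F} {n : ℕ} (w : Trm F)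
    (hn : n ∉ varList t) : subst (Function.update σ n w) t = subst σ t :=
  subst_congr t fun _ hm => Function.update_of_ne (ne_of_mem_of_not_mem hm hn) _ _

theorem subtermAt_subst_cases (σ : ℕ → Trm F) (t s : Trm F) (p : List ℕ)
    (h : subtermAt (subst σ t) p = some s) :
    (∃ u, subtermAt t p = some u ∧ ¬ IsVar u ∧ s = subst σ u) ∨
    ∃ p₁ p₂ n, p = p₁ ++ p₂ ∧ subtermAt t p₁ = some (var n) ∧ subtermAt (σ n) p₂ = some s := by
  cases t with
  | var n => exact .inr ⟨[], p, n, rfl, by simp, by simpa using h⟩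
  | app f ts =>
    cases p with
    | nil => exact .inl ⟨app f ts, rfl, not_false, by simpa using h.symm⟩
    | cons i p =>
      simp only [subst_app, subtermAt_app_cons_s2, List.getElem?_map, Option.bind_eq_some_iff,
        Option.map_eq_some_iff] at h
      obtain ⟨_, ⟨u, hu, rfl⟩, hus⟩ := h
      have hmem : u ∈ ts := List.mem_of_getElem? hu
      rcases subtermAt_subst_cases σ u s p hus with ⟨w, hw, hwv, rfl⟩ | ⟨p₁, p₂, n, rfl, hn, hσn⟩
      · exact .inl ⟨w, by simpa [subtermAt_app_cons_s2, hu] using hw, hwv, rfl⟩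
      · exact .inr ⟨i :: p₁, p₂, n, rfl, by simpa [subtermAt_app_cons_s2, hu] using hn, hσn⟩
termination_by sizeOf t
decreasing_by subst_vars; have := List.sizeOf_lt_of_mem hmem; simp; omega

theorem replaceAt_subst_of_subtermAt_var (σ : ℕ → Trm F) {t w w' : Trm F} {p₁ p₂ : List ℕ}
    {n : ℕ} (hlin : (varList t).Nodup) (hn : subtermAt t p₁ = some (var n))
    (hw : replaceAt (σ n) p₂ w = some w') :
    replaceAt (subst σ t) (p₁ ++ p₂) w = some (subst (Function.update σ n w') t) := by
  induction p₁ generalizing t with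
  | nil => simp_all
  | cons i p₁ ih =>
    cases t with
    | var m => simp at hn
    | app f ts =>
      simp only [subtermAt_app_cons_s2, Option.bind_eq_some_iff] at hn
      obtain ⟨u, hu, hun⟩ := hn
      rw [varList_app] at hlin
      obtain ⟨hi, hu_eq⟩ := List.getElem?_eq_some_iff.mp hu
      have hu_lin := (List.nodup_flatMap.mp hlin).1 u (List.mem_of_getElem? hu)
      simp only [subst_app, List.cons_append, replaceAt_app_cons, List.getElem?_map, hu,
        Option.map_some, Option.bind_some, ih hu_lin hun, Option.some_inj, app.injEq, true_and]
      refine List.ext_getElem? fun j => ?_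
      rcases eq_or_ne i j with rfl | hij
      · simp [hi, hu_eq]
      · rw [List.getElem?_set_ne hij, List.getElem?_map, List.getElem?_map]
        cases hv : ts[j]? with
        | none => rfl
        | some v =>
          have hnv := List.not_mem_of_nodup_flatMap hlin hu hv hij (mem_varList_of_subtermAt hun)
          simp [subst_update_of_not_mem σ w' hnv]

end Trm

theorem RewriteAt.of_append {R : Set (Rule F)} {t t' u : Trm F} {p q : List ℕ}
    (h : RewriteAt R t t' (p ++ q)) (hu : subtermAt t p = some u) :
    ∃ u', subtermAt t' p = some u' ∧ RewriteAt R u u' q := by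
  obtain ⟨l, r, σ, hlr, hsub, hrep⟩ := h
  obtain ⟨u', hu', htu'⟩ := exists_replaceAt_of_replaceAt_append hrep hu
  refine ⟨u', subtermAt_replaceAt htu', l, r, σ, hlr, ?_, hu'⟩
  simpa [subtermAt_append, hu] using hsub

theorem Orthogonal.isRedex_of_rewriteAt {R : Set (Rule F)} (ho : Orthogonal R) {s s' : Trm F}
    {q : List ℕ} (hs : IsRedex R s) (hstep : RewriteAt R s s' q) (hq : q ≠ []) :
    IsRedex R s' := by
  obtain ⟨l, r, σ, hlr, rfl⟩ := hs
  obtain ⟨l₂, r₂, τ, hlr₂, hsub, hrep⟩ := hstep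
  rcases subtermAt_subst_cases σ l _ q hsub with ⟨u, hu, hu_nv, hτ⟩ | ⟨p₁, p₂, n, rfl, hn, -⟩
  · exact absurd (ho.2 l r l₂ r₂ hlr hlr₂ q u hu hu_nv σ τ hτ.symm).1 hq
  · have hσn : subtermAt (subst σ l) p₁ = some (σ n) := by
      simpa using subtermAt_subst σ hn
    obtain ⟨w', hw', -⟩ := exists_replaceAt_of_replaceAt_append hrep hσn
    rw [replaceAt_subst_of_subtermAt_var σ (ho.1 l r hlr) hn hw', Option.some_inj] at hrep
    exact ⟨l, r, _, hlr, hrep.symm⟩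

theorem Orthogonal.hasRedexAt_of_rewriteAt {R : Set (Rule F)} (ho : Orthogonal R)
    {t t' : Trm F} {p q : List ℕ} (hred : HasRedexAt R t p) (hstep : RewriteAt R t t' q)
    (hpq : StrictPref p q) : HasRedexAt R t' p := by
  obtain ⟨⟨q₂, rfl⟩, hne⟩ := hpq
  obtain ⟨s, hs, hs_redex⟩ := hred
  obtain ⟨s', hs', hstep'⟩ := hstep.of_append hs
  exact ⟨s', hs', ho.isRedex_of_rewriteAt hs_redex hstep' (by rintro rfl; simp at hne)⟩

/-- a non-outermost step at q followed by an outermost step at p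
implies p ∥ q or p strictly above q. -/
theorem nonout_then_out_indep_or_above {F : Type} (R : Set (Rule F))
    (ho : Orthogonal R) (t₁ t₂ t₃ : Trm F) (q p : List ℕ)
    (h₁ : NonOutStepAt R t₁ t₂ q) (h₂ : OutStepAt R t₂ t₃ p) :
    Indep p q ∨ StrictPref p q := by
  by_cases hqp : q <+: p
  · exfalso
    obtain ⟨hstep, q', ⟨hq'q, hq'_ne⟩, hred⟩ := h₁
    have hq'p : StrictPref q' p :=
      ⟨hq'q.trans hqp, fun h => hq'_ne (antisymm hq'q (h ▸ hqp))⟩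
    exact h₂.2 q' hq'p (ho.hasRedexAt_of_rewriteAt hred hstep ⟨hq'q, hq'_ne⟩)
  · by_cases hpq : p <+: q
    · exact .inr ⟨hpq, by rintro rfl; exact hqp List.prefix_rfl⟩
    · exact .inl ⟨hpq, hqp⟩
end

section
/- The TRS with rules c → f(c) and f(x : σ) → c (over a signature with constant c, unary-on-stream symbol f, and binary constructor ':') is top terminating — no term admits an infinite reduction with infinitely many root steps — but the ground term c is not productive: c does not rewrite to any term with root symbol ':'. Hence top termination does not imply productivity. -/
open Trm

variable {F : Type}

/-- The signature for the system c → f(c), f(x : σ) → c. -/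
inductive F16 : Type
  | c | f | cons

/-- The rules c → f(c) and f(x : σ) → c. -/
def R16 : Set (Rule F16) :=
  {(Trm.app F16.c [], Trm.app F16.f [Trm.app F16.c []]),
   (Trm.app F16.f [Trm.app F16.cons [Trm.var 0, Trm.var 1]], Trm.app F16.c [])}

/-! The left-hand side `f(x : σ)` contains `:` while no right-hand side does, so `:`-free terms
stay `:`-free and only the rule `c → f(c)` ever fires on them; in particular `c` never reaches a
`:`-rooted term. After any root step the term is `c` or `f(c)`, hence `:`-free, and after one
more root step it is `f(c)`; from then on the root stays `f` and is never contracted. -/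

lemma Trm.subst_app_s16 (σ : ℕ → Trm F) (g : F) (ts : List (Trm F)) :
    subst σ (app g ts) = app g (ts.map (subst σ)) := by
  rw [subst, List.attach_map_val]

lemma Trm.replaceAt_app_cons_s16 {g : F} {ts : List (Trm F)} {i : ℕ} {p : List ℕ} {s t' : Trm F}
    (h : replaceAt (app g ts) (i :: p) s = some t') :
    ∃ ts', t' = app g ts' ∧ ts'.length = ts.length := by
  simp only [replaceAt, Option.bind_eq_some_iff, Option.map_eq_some_iff] at h
  obtain ⟨-, -, u, -, rfl⟩ := h
  exact ⟨_, rfl, List.length_set⟩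

lemma SymOver.subtermAt {S : Set F} :
    ∀ {t s : Trm F} {p : List ℕ}, SymOver S t → subtermAt t p = some s → SymOver S s
  | _, _, [], ht, hs => by cases hs; exact ht
  | .var _, _, _ :: _, _, hs => by simp [Trm.subtermAt] at hs
  | .app _ _, _, _ :: _, .app _ _ _ hts, hs => by
    obtain ⟨t₀, ht₀, hs⟩ := Option.bind_eq_some_iff.mp hs
    exact (hts t₀ (List.mem_of_getElem? ht₀)).subtermAt hs

lemma SymOver.replaceAt {S : Set F} :
    ∀ {t s t' : Trm F} {p : List ℕ}, SymOver S t → SymOver S s →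
      replaceAt t p s = some t' → SymOver S t'
  | _, _, _, [], _, hs, h => by cases h; exact hs
  | .var _, _, _, _ :: _, _, _, h => by simp [Trm.replaceAt] at h
  | .app _ _, _, _, _ :: _, .app _ _ hg hts, hs, h => by
    simp only [Trm.replaceAt, Option.bind_eq_some_iff, Option.map_eq_some_iff] at h
    obtain ⟨t₀, ht₀, u, hu, rfl⟩ := h
    refine .app _ _ hg fun x hx => ?_
    rcases List.mem_or_eq_of_mem_set hx with hx | rfl
    · exact hts x hx
    · exact (hts t₀ (List.mem_of_getElem? ht₀)).replaceAt hs hu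

lemma RewriteAt.seq_invariant {R : Set (Rule F)} {P : Trm F → Prop}
    (hP : ∀ {t t' p}, P t → RewriteAt R t t' p → P t') {ts : ℕ → Trm F} {ps : ℕ → List ℕ}
    (hts : ∀ i, RewriteAt R (ts i) (ts (i + 1)) (ps i)) {i j : ℕ} (hij : i ≤ j)
    (hi : P (ts i)) : P (ts j) := by
  induction j, hij using Nat.le_induction with
  | base => exact hi
  | succ k _ ih => exact hP ih (hts k)

namespace R16

lemma mem_iff {l r : Trm F16} :
    (l, r) ∈ R16 ↔
      (l = app F16.c [] ∧ r = app F16.f [app F16.c []]) ∨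
      (l = app F16.f [app F16.cons [var 0, var 1]] ∧ r = app F16.c []) := by
  simp [R16, Prod.ext_iff]

def ConsFree (t : Trm F16) : Prop := SymOver {g | g ≠ F16.cons} t

lemma consFree_c : ConsFree (app F16.c []) :=
  .app _ _ (by simp) (by simp)

lemma consFree_f_c : ConsFree (app F16.f [app F16.c []]) :=
  .app _ _ (by simp) fun t ht => by
    rw [List.mem_singleton.mp ht]
    exact consFree_c

lemma not_consFree_cons (u v : Trm F16) : ¬ ConsFree (app F16.cons [u, v]) := by
  rintro ⟨⟩
  contradiction

lemma not_consFree_f_cons (u v : Trm F16) :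
    ¬ ConsFree (app F16.f [app F16.cons [u, v]]) := by
  intro h
  cases h with
  | app _ _ _ hts => exact not_consFree_cons u v (hts _ (by simp))

lemma rewriteAt_of_consFree {t t' : Trm F16} {p : List ℕ} (ht : ConsFree t)
    (h : RewriteAt R16 t t' p) :
    subtermAt t p = some (app F16.c []) ∧ replaceAt t p (app F16.f [app F16.c []]) = some t' := by
  obtain ⟨l, r, σ, hmem, hsub, hrep⟩ := h
  rcases mem_iff.mp hmem with ⟨rfl, rfl⟩ | ⟨rfl, rfl⟩
  · simpa [Trm.subst_app_s16] using And.intro hsub hrep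
  · simp only [Trm.subst_app_s16, List.map_cons, List.map_nil] at hsub
    exact absurd (SymOver.subtermAt ht hsub) (not_consFree_f_cons _ _)

lemma ConsFree.rewriteAt {t t' : Trm F16} {p : List ℕ} (ht : ConsFree t)
    (h : RewriteAt R16 t t' p) : ConsFree t' :=
  SymOver.replaceAt ht consFree_f_c (rewriteAt_of_consFree ht h).2

lemma ConsFree.rewriteStar {t t' : Trm F16} (ht : ConsFree t) (h : RewriteStar R16 t t') :
    ConsFree t' := by
  induction h with
  | refl => exact ht
  | tail _ hstep ih => exact ih.rewriteAt hstep.choose_spec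

lemma rewriteAt_nil_of_consFree {t t' : Trm F16} (ht : ConsFree t)
    (h : RewriteAt R16 t t' []) : t = app F16.c [] ∧ t' = app F16.f [app F16.c []] := by
  simpa [Trm.subtermAt, Trm.replaceAt, eq_comm] using rewriteAt_of_consFree ht h

lemma consFree_of_rewriteAt_nil {t t' : Trm F16} (h : RewriteAt R16 t t' []) :
    ConsFree t' := by
  obtain ⟨l, r, σ, hmem, -, hrep⟩ := h
  simp only [Trm.replaceAt, Option.some.injEq] at hrep
  rcases mem_iff.mp hmem with ⟨rfl, rfl⟩ | ⟨rfl, rfl⟩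
  · simpa [Trm.subst_app_s16, ← hrep] using consFree_f_c
  · simpa [Trm.subst_app_s16, ← hrep] using consFree_c

def Stuck (t : Trm F16) : Prop := ConsFree t ∧ ∃ u, t = app F16.f [u]

lemma Stuck.rewriteAt {t t' : Trm F16} {p : List ℕ} (ht : Stuck t)
    (h : RewriteAt R16 t t' p) : p ≠ [] ∧ Stuck t' := by
  obtain ⟨hcf, u, rfl⟩ := ht
  cases p with
  | nil => exact absurd (rewriteAt_nil_of_consFree hcf h).1 (by simp)
  | cons i q =>
    obtain ⟨ts', rfl, hlen⟩ := Trm.replaceAt_app_cons_s16 (rewriteAt_of_consFree hcf h).2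
    obtain ⟨u', rfl⟩ := List.length_eq_one_iff.mp hlen
    exact ⟨List.cons_ne_nil _ _, hcf.rewriteAt h, u', rfl⟩

end R16

open R16 in
/-- the TRS {c → f(c), f(x : σ) → c} is top terminating but c is not
productive: c does not rewrite to any ':'-rooted term. Hence top termination does
not imply productivity. -/
theorem top_termination_not_productivity :
    (¬ ∃ (ts : ℕ → Trm F16) (ps : ℕ → List ℕ),
        (∀ i, RewriteAt R16 (ts i) (ts (i + 1)) (ps i)) ∧
        (∀ N, ∃ i, N ≤ i ∧ ps i = [])) ∧
    (¬ ∃ u t', RewriteStar R16 (Trm.app F16.c []) (Trm.app F16.cons [u, t'])) := by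
  constructor
  · rintro ⟨ts, ps, hstep, hroot⟩
    obtain ⟨i₀, -, h₀⟩ := hroot 0
    have hcf₀ : ConsFree (ts (i₀ + 1)) := consFree_of_rewriteAt_nil (h₀ ▸ hstep i₀)
    obtain ⟨i₁, hi₁, h₁⟩ := hroot (i₀ + 1)
    have hcf₁ : ConsFree (ts i₁) := RewriteAt.seq_invariant ConsFree.rewriteAt hstep hi₁ hcf₀
    obtain ⟨-, hf⟩ := rewriteAt_nil_of_consFree hcf₁ (h₁ ▸ hstep i₁)
    have hstuck : Stuck (ts (i₁ + 1)) := hf ▸ ⟨consFree_f_c, _, rfl⟩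
    obtain ⟨i₂, hi₂, h₂⟩ := hroot (i₁ + 1)
    have hstuck₂ : Stuck (ts i₂) :=
      RewriteAt.seq_invariant (fun h hs => (Stuck.rewriteAt h hs).2) hstep hi₂ hstuck
    exact (hstuck₂.rewriteAt (hstep i₂)).1 h₂
  · rintro ⟨u, t', h⟩
    exact not_consFree_cons u t' (consFree_c.rewriteStar h)
end

section
/- Consider the TRS with rules c → 1 : c, f(x : σ) → g(x, σ), g(0, σ) → f(σ), g(1, σ) → 1 : f(σ), together with x : σ → overflow. Every ground term of sort s built from c, f, g, ':' and the data constants 0, 1 rewrites to a term with root ':' (before applying the overflow rule); equivalently, this stream specification is productive for all ground terms of sort s. -/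
open Trm

variable {F : Type}

/-- The signature with data constants 0, 1 and stream symbols c, f, g, ':'. -/
inductive F17 : Type
  | zero | one | c | f | g | cons

/-- Sorts: 0, 1 : d; c : s; f : s → s; g : d × s → s; ':' : d × s → s. -/
def ar17 : F17 → List Bool × Bool
  | F17.zero => ([], false)
  | F17.one => ([], false)
  | F17.c => ([], true)
  | F17.f => ([true], true)
  | F17.g => ([false, true], true)
  | F17.cons => ([false, true], true)

/-- The rules c → 1 : c, f(x : σ) → g(x, σ), g(0, σ) → f(σ), g(1, σ) → 1 : f(σ). -/
def R17 : Set (Rule F17) :=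
  {(Trm.app F17.c [], Trm.app F17.cons [Trm.app F17.one [], Trm.app F17.c []]),
   (Trm.app F17.f [Trm.app F17.cons [Trm.var 0, Trm.var 1]],
    Trm.app F17.g [Trm.var 0, Trm.var 1]),
   (Trm.app F17.g [Trm.app F17.zero [], Trm.var 1], Trm.app F17.f [Trm.var 1]),
   (Trm.app F17.g [Trm.app F17.one [], Trm.var 1],
    Trm.app F17.cons [Trm.app F17.one [], Trm.app F17.f [Trm.var 1]])}

/-! The ground stream terms are generated by `σ ::= b : σ | c | f(σ) | g(b, σ)`, `b ∈ {0, 1}`.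
The key fact is `f(σ) →* 1 : σ'` with `σ'` again of this shape, by structural induction on `σ`:
`f(0 : τ) → g(0, τ) → f(τ)` falls back on `τ`, `f(1 : τ) → g(1, τ) → 1 : f(τ)`, and for
`σ = c`, `f(τ)`, `g(b, τ)` the argument is first rewritten to a `:`-rooted term (by `c → 1 : c`,
the induction hypothesis, or one `g`-step). So every such term reaches a `:`-rooted term whose
tail is again of this shape, and iterating gives productivity. -/

section Rewriting

variable {R : Set (Rule F)}

lemma Ground.of_mem_args {f : F} {ts : List (Trm F)} (h : Ground (app f ts)) {t : Trm F}
    (ht : t ∈ ts) : Ground t := by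
  rw [Ground, varList, List.flatMap_eq_nil_iff] at h
  exact h ⟨t, ht⟩ (List.mem_attach _ _)

lemma Rewrite.root {l r : Trm F} (hlr : (l, r) ∈ R) (σ : ℕ → Trm F) :
    Rewrite R (subst σ l) (subst σ r) :=
  ⟨[], l, r, σ, hlr, rfl, rfl⟩

lemma Rewrite.app_set {s s' : Trm F} (h : Rewrite R s s') (f : F) {ts : List (Trm F)} {i : ℕ}
    (hi : ts[i]? = some s) : Rewrite R (app f ts) (app f (ts.set i s')) := by
  obtain ⟨p, l, r, σ, hlr, hsub, hrep⟩ := h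
  exact ⟨i :: p, l, r, σ, hlr, by simp [subtermAt, hi, hsub], by simp [replaceAt, hi, hrep]⟩

lemma RewriteStar.app_set {s s' : Trm F} (h : RewriteStar R s s') (f : F) {ts : List (Trm F)}
    {i : ℕ} (hi : ts[i]? = some s) : RewriteStar R (app f ts) (app f (ts.set i s')) := by
  obtain ⟨hlt, rfl⟩ := List.getElem?_eq_some_iff.mp hi
  induction h with
  | refl => rw [List.set_getElem_self]
  | tail _ hstep ih =>
    refine ih.tail ?_
    simpa using hstep.app_set f (ts := ts.set i _) (i := i) (by simp [hlt])

lemma productive_of_rewriteStar_cons {c : F} {P : Trm F → Prop}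
    (hP : ∀ t, P t → ∃ u t', P t' ∧ RewriteStar R t (app c [u, t'])) :
    ∀ t, P t → Productive R c t := by
  intro t ht n
  induction n generalizing t with
  | zero => exact ⟨t, .refl, trivial⟩
  | succ n ih =>
    obtain ⟨u, s, hs, hts⟩ := hP t ht
    obtain ⟨s', hss', hs'⟩ := ih s hs
    exact ⟨app c [u, s'], hts.trans (hss'.app_set c (i := 1) rfl), u, s', rfl, hs'⟩

end Rewriting

namespace F17

lemma rewrite_c : Rewrite R17 (app .c []) (app .cons [app .one [], app .c []]) := by
  simpa [subst] using Rewrite.root (R := R17) (.inl rfl) var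

lemma rewrite_f_cons (x y : Trm F17) :
    Rewrite R17 (app .f [app .cons [x, y]]) (app .g [x, y]) := by
  simpa [subst] using Rewrite.root (R := R17) (.inr (.inl rfl)) fun n => if n = 0 then x else y

lemma rewrite_g_zero (y : Trm F17) : Rewrite R17 (app .g [app .zero [], y]) (app .f [y]) := by
  simpa [subst] using Rewrite.root (R := R17) (.inr (.inr (.inl rfl))) fun _ => y

lemma rewrite_g_one (y : Trm F17) :
    Rewrite R17 (app .g [app .one [], y]) (app .cons [app .one [], app .f [y]]) := by
  simpa [subst] using Rewrite.root (R := R17) (.inr (.inr (.inr rfl))) fun _ => y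

lemma rewriteStar_f {s s' : Trm F17} (h : RewriteStar R17 s s') :
    RewriteStar R17 (app .f [s]) (app .f [s']) :=
  h.app_set .f (i := 0) rfl

def IsBit (u : Trm F17) : Prop := u = app .zero [] ∨ u = app .one []

inductive IsStream : Trm F17 → Prop
  | cons {u t} : IsBit u → IsStream t → IsStream (app .cons [u, t])
  | c : IsStream (app .c [])
  | f {t} : IsStream t → IsStream (app .f [t])
  | g {u t} : IsBit u → IsStream t → IsStream (app .g [u, t])

def IsOfSort : Bool → Trm F17 → Prop
  | false, t => IsBit t
  | true, t => IsStream t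

lemma isOfSort_of_ws {t : Trm F17} {b : Bool} (hws : WS ar17 (fun _ => false) t b)
    (hg : Ground t) : IsOfSort b t := by
  induction hws with
  | var => simp [Ground, varList] at hg
  | app sym ts hlen _ ih =>
    have harg (i : ℕ) (t : Trm F17) b (hi : ts[i]? = some t) (hb : (ar17 sym).1[i]? = some b) :
        IsOfSort b t :=
      ih i t b hi hb (Ground.of_mem_args hg (List.mem_of_getElem? hi))
    cases sym with
    | zero => obtain rfl := List.eq_nil_of_length_eq_zero hlen; exact .inl rfl
    | one => obtain rfl := List.eq_nil_of_length_eq_zero hlen; exact .inr rfl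
    | c => obtain rfl := List.eq_nil_of_length_eq_zero hlen; exact .c
    | f =>
      obtain ⟨s, rfl⟩ := List.length_eq_one_iff.mp hlen
      exact .f (harg 0 s true rfl rfl)
    | g =>
      obtain ⟨u, s, rfl⟩ := List.length_eq_two.mp hlen
      exact .g (harg 0 u false rfl rfl) (harg 1 s true rfl rfl)
    | cons =>
      obtain ⟨u, s, rfl⟩ := List.length_eq_two.mp hlen
      exact .cons (harg 0 u false rfl rfl) (harg 1 s true rfl rfl)

lemma IsStream.f_rewriteStar {t : Trm F17} (ht : IsStream t) :
    ∃ t', IsStream t' ∧ RewriteStar R17 (app .f [t]) (app .cons [app .one [], t']) := by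
  have f_one_cons (s : Trm F17) :
      RewriteStar R17 (app .f [app .cons [app .one [], s]]) (app .cons [app .one [], app .f [s]]) :=
    (Relation.ReflTransGen.single (rewrite_f_cons _ _)).tail (rewrite_g_one s)
  induction ht with
  | @cons u s hu hs ih =>
    rcases hu with rfl | rfl
    · obtain ⟨t', ht', hst'⟩ := ih
      exact ⟨t', ht', ((Relation.ReflTransGen.single (rewrite_f_cons _ _)).tail
        (rewrite_g_zero s)).trans hst'⟩
    · exact ⟨_, .f hs, f_one_cons s⟩
  | c => exact ⟨_, .f .c, (rewriteStar_f (.single rewrite_c)).trans (f_one_cons _)⟩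
  | @f s _ ih =>
    obtain ⟨t', ht', hst'⟩ := ih
    exact ⟨_, .f ht', (rewriteStar_f hst').trans (f_one_cons t')⟩
  | @g u s hu hs ih =>
    rcases hu with rfl | rfl
    · obtain ⟨t', ht', hst'⟩ := ih
      exact ⟨_, .f ht',
        ((rewriteStar_f (.single (rewrite_g_zero s))).trans (rewriteStar_f hst')).trans
          (f_one_cons t')⟩
    · exact ⟨_, .f (.f hs), (rewriteStar_f (.single (rewrite_g_one s))).trans (f_one_cons _)⟩

lemma IsStream.rewriteStar_cons {t : Trm F17} (ht : IsStream t) :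
    ∃ u t', IsStream t' ∧ RewriteStar R17 t (app .cons [u, t']) := by
  cases ht with
  | cons _ hs => exact ⟨_, _, hs, .refl⟩
  | c => exact ⟨_, _, .c, .single rewrite_c⟩
  | f hs =>
    obtain ⟨t', ht', hst'⟩ := hs.f_rewriteStar
    exact ⟨_, t', ht', hst'⟩
  | @g u s hu hs =>
    rcases hu with rfl | rfl
    · obtain ⟨t', ht', hst'⟩ := hs.f_rewriteStar
      exact ⟨_, t', ht', (Relation.ReflTransGen.single (rewrite_g_zero s)).trans hst'⟩
    · exact ⟨_, _, .f hs, .single (rewrite_g_one s)⟩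

end F17

/-- every ground term of sort s over this signature rewrites (w.r.t.
the four stream rules) to a ':'-rooted term; equivalently, the specification is
productive for all ground terms of sort s. -/
theorem example_productive :
    ∀ t : Trm F17, Ground t → WS ar17 (fun _ => false) t true →
      (∃ u t', RewriteStar R17 t (Trm.app F17.cons [u, t'])) ∧
      Productive R17 F17.cons t := by
  intro t hg hws
  have ht : F17.IsStream t := F17.isOfSort_of_ws hws hg
  obtain ⟨u, t', -, htt'⟩ := ht.rewriteStar_cons
  exact ⟨⟨u, t', htt'⟩,
    productive_of_rewriteStar_cons (fun _ hs => hs.rewriteStar_cons) t ht⟩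
end
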